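/- arXiv:2409.11204 — 5 statements merged into one kernel-verified Lean document; each statement's English description precedes it below -/
import Mathlib

section
/- Let U and X be nonempty types, let g : U → X be a surjection and g' : X → U a section of g (i.e. g ∘ g' = id on X). Let Y be a type and let G : (X → Y) → X → X → Y and H : Y → Y → Y be arbitrary functions. Suppose f : U → Y satisfies G (f ∘ g') (g u) (g v) = H (f u) (f v) for all u, v ∈ U, and suppose there exists u₀ ∈ U such that either the map y ↦ H (f u₀) y or the map y ↦ H y (f u₀) is injective on the image f(U) (i.e. for all u, u' ∈ U, H (f u₀) (f u) = H (f u₀) (f u') implies f u = f u', respectively with the arguments of H reversed). Then f is a canonical solution: there exists ρ : X → Y satisfying G ρ x y = H (ρ x) (ρ y) for all x, y ∈ X such that f = ρ ∘ g. -/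
/-!
The left-hand side `G (f ∘ g') (g u) (g v)` depends on `u` only through `g u`, and so does
`H (f u₀) (f u)` (resp. `H (f u) (f u₀)`); injectivity then forces `f u = f (g' (g u))`, i.e.
`f = (f ∘ g') ∘ g`. Substituting `u = g' x`, `v = g' y` shows that `f ∘ g'` solves the
characteristic equation for every solution `f`.
-/

section SectionMethod

variable {U X Y : Type*} {g : U → X} {g' : X → U} {G : (X → Y) → X → X → Y}
  {H : Y → Y → Y} {f : U → Y}

theorem comp_section_solves_characteristic (hsec : ∀ x : X, g (g' x) = x)
    (hf : ∀ u v : U, G (f ∘ g') (g u) (g v) = H (f u) (f v)) (x y : X) :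
    G (f ∘ g') x y = H ((f ∘ g') x) ((f ∘ g') y) := by
  simpa only [hsec, Function.comp_apply] using hf (g' x) (g' y)

theorem apply_eq_apply_section_of_injective_left (hsec : ∀ x : X, g (g' x) = x)
    (hf : ∀ u v : U, G (f ∘ g') (g u) (g v) = H (f u) (f v)) {u₀ : U}
    (hinj : ∀ u u' : U, H (f u₀) (f u) = H (f u₀) (f u') → f u = f u') (u : U) :
    f u = f (g' (g u)) :=
  hinj _ _ <| by rw [← hf u₀ u, ← hf u₀ (g' (g u)), hsec]

theorem apply_eq_apply_section_of_injective_right (hsec : ∀ x : X, g (g' x) = x)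
    (hf : ∀ u v : U, G (f ∘ g') (g u) (g v) = H (f u) (f v)) {u₀ : U}
    (hinj : ∀ u u' : U, H (f u) (f u₀) = H (f u') (f u₀) → f u = f u') (u : U) :
    f u = f (g' (g u)) :=
  hinj _ _ <| by rw [← hf u u₀, ← hf (g' (g u)) u₀, hsec]

end SectionMethod

theorem section_method_part3_general {U X Y : Type*}
    (g : U → X) (g' : X → U)
    (hsec : ∀ x : X, g (g' x) = x)
    (G : (X → Y) → X → X → Y) (H : Y → Y → Y) (f : U → Y)
    (hf : ∀ u v : U, G (f ∘ g') (g u) (g v) = H (f u) (f v))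
    (hinj : ∃ u₀ : U,
      (∀ u u' : U, H (f u₀) (f u) = H (f u₀) (f u') → f u = f u') ∨
      (∀ u u' : U, H (f u) (f u₀) = H (f u') (f u₀) → f u = f u')) :
    ∃ ρ : X → Y, (∀ x y : X, G ρ x y = H (ρ x) (ρ y)) ∧ f = ρ ∘ g := by
  refine ⟨f ∘ g', comp_section_solves_characteristic hsec hf, funext fun u => ?_⟩
  obtain ⟨u₀, hleft | hright⟩ := hinj
  · exact apply_eq_apply_section_of_injective_left hsec hf hleft u
  · exact apply_eq_apply_section_of_injective_right hsec hf hright u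

/-- Section method, part 3: a solution `f` of the original equation such that
`H (f u₀) ·` (or `H · (f u₀)`) is injective on the image of `f` is a canonical
solution, i.e. `f = ρ ∘ g` for some solution `ρ` of the characteristic equation. -/
theorem section_method_part3 {U X Y : Type*} [Nonempty U] [Nonempty X]
    (g : U → X) (g' : X → U)
    (hg : Function.Surjective g) (hsec : ∀ x : X, g (g' x) = x)
    (G : (X → Y) → X → X → Y) (H : Y → Y → Y) (f : U → Y)
    (hf : ∀ u v : U, G (f ∘ g') (g u) (g v) = H (f u) (f v))
    (hinj : ∃ u₀ : U,
      (∀ u u' : U, H (f u₀) (f u) = H (f u₀) (f u') → f u = f u') ∨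
      (∀ u u' : U, H (f u) (f u₀) = H (f u') (f u₀) → f u = f u')) :
    ∃ ρ : X → Y, (∀ x y : X, G ρ x y = H (ρ x) (ρ y)) ∧ f = ρ ∘ g :=
  section_method_part3_general g g' hsec G H f hf hinj
end

section
/- Let n be a positive integer, let m ≥ 3 be an odd integer, let (Y,+) be an abelian group that is (n!)-divisible (the map y ↦ (n!) • y is bijective on Y), and let r : ℝ → ℝ be the real m-th root function, i.e. (r x)^m = x for all x ∈ ℝ. Then f : ℝ → Y satisfies Σ_{i=0}^{n} (-1)^{n-i} (n choose i) • f(r(u^m + i·v^m)) = (n!) • f(v) for all u, v ∈ ℝ if and only if there exists an n-monomial ρ : ℝ → Y (i.e. Δ_y^n ρ(x) = (n!) • ρ(y) for all x, y ∈ ℝ) such that f(u) = ρ(u^m) for all u ∈ ℝ. -/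
open Finset

/-- The finite-difference operator `Δ_y^j` applied to `ρ : ℝ → Y` at `x`. -/
def fdiff {Y : Type*} [AddCommGroup Y]
    (j : ℕ) (y : ℝ) (ρ : ℝ → Y) (x : ℝ) : Y :=
  ∑ i ∈ Finset.range (j + 1), ((-1) ^ (j - i) * (j.choose i) : ℤ) • ρ (x + i * y)

lemma root_pow_of_odd {m : ℕ} (hm : Odd m) {r : ℝ → ℝ} (hr : ∀ x, r x ^ m = x) (u : ℝ) :
    r (u ^ m) = u :=
  hm.strictMono_pow.injective (hr _)

theorem radical_monomial_odd_general {Y : Type*} [AddCommGroup Y]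
    (n : ℕ)
    (m : ℕ) (hmodd : Odd m)
    (r : ℝ → ℝ) (hr : ∀ x : ℝ, (r x) ^ m = x)
    (f : ℝ → Y) :
    (∀ u v : ℝ,
        ∑ i ∈ Finset.range (n + 1),
          ((-1) ^ (n - i) * (n.choose i) : ℤ) • f (r (u ^ m + i * v ^ m)) =
        (n.factorial : ℤ) • f v) ↔
      ∃ ρ : ℝ → Y,
        (∀ x y : ℝ, fdiff n y ρ x = (n.factorial : ℤ) • ρ y) ∧
        ∀ u : ℝ, f u = ρ (u ^ m) := by
  have hru := root_pow_of_odd hmodd hr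
  constructor
  · intro h
    refine ⟨f ∘ r, fun x y => ?_, fun u => by simp [hru]⟩
    simpa [fdiff, hr] using h (r x) (r y)
  · rintro ⟨ρ, hρ, hf⟩ u v
    simpa only [fdiff, hf, hr] using hρ (u ^ m) (v ^ m)

/-- Radical-monomial equation, odd exponent: `f : ℝ → Y` satisfies
`Σ_{i=0}^{n} (-1)^{n-i} C(n,i) • f(r(u^m + i v^m)) = n! • f(v)` iff
`f(u) = ρ(u^m)` for some `n`-monomial `ρ : ℝ → Y`. -/
theorem radical_monomial_odd {Y : Type*} [AddCommGroup Y]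
    (n : ℕ) (hn : 0 < n)
    (hdiv : Function.Bijective (fun y : Y => (n.factorial : ℤ) • y))
    (m : ℕ) (hm : 3 ≤ m) (hmodd : Odd m)
    (r : ℝ → ℝ) (hr : ∀ x : ℝ, (r x) ^ m = x)
    (f : ℝ → Y) :
    (∀ u v : ℝ,
        ∑ i ∈ Finset.range (n + 1),
          ((-1) ^ (n - i) * (n.choose i) : ℤ) • f (r (u ^ m + i * v ^ m)) =
        (n.factorial : ℤ) • f v) ↔
      ∃ ρ : ℝ → Y,
        (∀ x y : ℝ, fdiff n y ρ x = (n.factorial : ℤ) • ρ y) ∧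
        ∀ u : ℝ, f u = ρ (u ^ m) :=
  radical_monomial_odd_general n m hmodd r hr f
end

section
/- Let n be a positive integer, let m ≥ 2 be an even integer, and let (Y,+) be an abelian group that is (n!)-divisible (the map y ↦ (n!) • y is bijective on Y). Then f : ℝ → Y satisfies Σ_{i=0}^{n} (-1)^{n-i} (n choose i) • f((u^m + i·v^m)^{1/m}) = (n!) • f(v) for all u, v ∈ ℝ (where t^{1/m} denotes the nonnegative real m-th root of t ≥ 0; note u^m + i·v^m ≥ 0) if and only if there exists ρ : ℝ → Y which is an n-monomial on [0,∞) (i.e. Δ_y^n ρ(x) = (n!) • ρ(y) for all x, y ∈ [0,∞)) such that f(u) = ρ(u^m) for all u ∈ ℝ. -/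
open Finset Real

/-!
Writing `g t = f (t ^ (1 / m))`, the left side of the equation at `(u, v)` is literally
`Δ_{v^m}^n g (u^m)`, and every pair `x, y ≥ 0` arises as `(u^m, v^m)`. So the equation says
that `g` is an `n`-monomial on `[0, ∞)`; it remains to see that `f u = g (u^m) = f |u|`, which
holds because, by the equation at `u = 0` and `n!`-torsion-freeness, `n! • f v` depends only
on `v^m`.
-/

section

variable {Y : Type*} [AddCommGroup Y]

theorem fdiff_congr_of_eqOn_Ici {ρ σ : ℝ → Y} (h : Set.EqOn ρ σ (Set.Ici 0)) (j : ℕ)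
    {x y : ℝ} (hx : 0 ≤ x) (hy : 0 ≤ y) : fdiff j y ρ x = fdiff j y σ x :=
  Finset.sum_congr rfl fun i _ => congrArg _ (h (add_nonneg hx (mul_nonneg i.cast_nonneg hy)))

theorem sum_radical_eq_fdiff (n m : ℕ) (f : ℝ → Y) (u v : ℝ) :
    ∑ i ∈ Finset.range (n + 1),
        ((-1) ^ (n - i) * (n.choose i) : ℤ) • f ((u ^ m + i * v ^ m) ^ ((m : ℝ)⁻¹)) =
      fdiff n (v ^ m) (fun t => f (t ^ ((m : ℝ)⁻¹))) (u ^ m) :=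
  rfl

end

theorem Even.pow_rpow_inv_natCast {m : ℕ} (hm : Even m) (hm0 : m ≠ 0) (u : ℝ) :
    (u ^ m) ^ ((m : ℝ)⁻¹) = |u| := by
  rw [← hm.pow_abs, Real.pow_rpow_inv_natCast (abs_nonneg u) hm0]

theorem radical_monomial_even_general {Y : Type*} [AddCommGroup Y]
    (n : ℕ)
    (hdiv : Function.Bijective (fun y : Y => (n.factorial : ℤ) • y))
    (m : ℕ) (hm : 2 ≤ m) (hmeven : Even m)
    (f : ℝ → Y) :
    (∀ u v : ℝ,
        ∑ i ∈ Finset.range (n + 1),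
          ((-1) ^ (n - i) * (n.choose i) : ℤ) •
            f ((u ^ m + i * v ^ m) ^ ((m : ℝ)⁻¹)) =
        (n.factorial : ℤ) • f v) ↔
      ∃ ρ : ℝ → Y,
        (∀ x ∈ Set.Ici (0 : ℝ), ∀ y ∈ Set.Ici (0 : ℝ),
          fdiff n y ρ x = (n.factorial : ℤ) • ρ y) ∧
        ∀ u : ℝ, f u = ρ (u ^ m) := by
  have hm0 : m ≠ 0 := by omega
  simp only [sum_radical_eq_fdiff]
  constructor
  · intro h
    have hf_abs (v : ℝ) : f v = f |v| := by
      have h_abs := h 0 |v|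
      rw [hmeven.pow_abs] at h_abs
      exact hdiv.injective ((h 0 v).symm.trans h_abs)
    refine ⟨fun t => f (t ^ ((m : ℝ)⁻¹)), fun x hx y hy => ?_, fun u => ?_⟩
    · simpa only [rpow_inv_natCast_pow hx hm0, rpow_inv_natCast_pow hy hm0] using
        h (x ^ ((m : ℝ)⁻¹)) (y ^ ((m : ℝ)⁻¹))
    · dsimp only
      rw [hmeven.pow_rpow_inv_natCast hm0, ← hf_abs]
  · rintro ⟨ρ, hρ, hf⟩ u v
    obtain rfl : f = fun u => ρ (u ^ m) := funext hf
    have h_root : Set.EqOn (fun t => ρ ((t ^ ((m : ℝ)⁻¹)) ^ m)) ρ (Set.Ici 0) :=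
      fun t ht => congrArg ρ (rpow_inv_natCast_pow ht hm0)
    rw [fdiff_congr_of_eqOn_Ici h_root n (hmeven.pow_nonneg u) (hmeven.pow_nonneg v)]
    exact hρ _ (hmeven.pow_nonneg u) _ (hmeven.pow_nonneg v)

/-- Radical-monomial equation, even exponent: `f : ℝ → Y` satisfies
`Σ_{i=0}^{n} (-1)^{n-i} C(n,i) • f((u^m + i v^m)^{1/m}) = n! • f(v)` iff
`f(u) = ρ(u^m)` for some `ρ : ℝ → Y` which is an `n`-monomial on `[0,∞)`.
Here `t^{1/m}` is the nonnegative real `m`-th root, given by `Real.rpow`. -/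
theorem radical_monomial_even {Y : Type*} [AddCommGroup Y]
    (n : ℕ) (hn : 0 < n)
    (hdiv : Function.Bijective (fun y : Y => (n.factorial : ℤ) • y))
    (m : ℕ) (hm : 2 ≤ m) (hmeven : Even m)
    (f : ℝ → Y) :
    (∀ u v : ℝ,
        ∑ i ∈ Finset.range (n + 1),
          ((-1) ^ (n - i) * (n.choose i) : ℤ) •
            f ((u ^ m + i * v ^ m) ^ ((m : ℝ)⁻¹)) =
        (n.factorial : ℤ) • f v) ↔
      ∃ ρ : ℝ → Y,
        (∀ x ∈ Set.Ici (0 : ℝ), ∀ y ∈ Set.Ici (0 : ℝ),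
          fdiff n y ρ x = (n.factorial : ℤ) • ρ y) ∧
        ∀ u : ℝ, f u = ρ (u ^ m) :=
  radical_monomial_even_general n hdiv m hm hmeven f
end

section
/- Let n be a positive integer and let (Y,+) be an abelian group that is (n!)-divisible (the map y ↦ (n!) • y is bijective on Y). Let U := ℝ \ {kπ | k ∈ ℤ} = {u ∈ ℝ | sin u ≠ 0}. Then f : ℝ → Y satisfies Σ_{i=0}^{n} (-1)^{n-i} (n choose i) • f(arcsin |sin u · (sin v)^i|) = (n!) • f(v) for all u, v ∈ U if and only if there exists ρ : ℝ → Y which is an n-monomial on (-∞, 0] (i.e. Δ_y^n ρ(x) = (n!) • ρ(y) for all x, y ∈ (-∞, 0]) such that f(u) = ρ(ln |sin u|) for all u ∈ U. -/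
/-!
Writing `x = log |sin u|` and `y = log |sin v|`, the `i`-th argument `arcsin |sin u · (sin v)^i|`
has `log |sin| = x + i y`, so once `f = ρ ∘ log |sin ·|` on `U` the equation is literally
`Δ_y^n ρ(x) = n! • ρ(y)`, and `log |sin ·|` maps `U` onto `(-∞, 0]`. Conversely, putting
`u = π/2` shows that `n! • f v` only depends on `|sin v|`; by injectivity of `n! • ·`, so does
`f v`, which gives `ρ x = f (arcsin (exp x))`.
-/

open Finset Real

noncomputable def arcsinSum {Y : Type*} [AddCommGroup Y] (n : ℕ) (f : ℝ → Y) (u v : ℝ) : Y :=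
  ∑ i ∈ range (n + 1), ((-1) ^ (n - i) * (n.choose i) : ℤ) • f (arcsin |sin u * sin v ^ i|)

theorem sin_arcsin_abs {t : ℝ} (ht : |t| ≤ 1) : sin (arcsin |t|) = |t| :=
  sin_arcsin (by linarith [abs_nonneg t]) ht

theorem log_abs_sin_nonpos (u : ℝ) : log |sin u| ≤ 0 :=
  log_nonpos (abs_nonneg _) (abs_sin_le_one u)

theorem exists_log_abs_sin_eq {x : ℝ} (hx : x ≤ 0) : ∃ u, sin u ≠ 0 ∧ log |sin u| = x := by
  have hsin : sin (arcsin (exp x)) = exp x :=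
    sin_arcsin (by linarith [exp_pos x]) (exp_le_one_iff.mpr hx)
  exact ⟨_, by rw [hsin]; exact (exp_pos x).ne', by rw [hsin, abs_of_pos (exp_pos x), log_exp]⟩

theorem abs_sin_mul_sin_pow_le_one (u v : ℝ) (i : ℕ) : |sin u * sin v ^ i| ≤ 1 := by
  rw [abs_mul, abs_pow]
  exact mul_le_one₀ (abs_sin_le_one u) (by positivity)
    (pow_le_one₀ (abs_nonneg _) (abs_sin_le_one v))

theorem apply_arcsin_abs_of_eq_comp_log_abs_sin {α : Type*} {f ρ : ℝ → α}
    (hf : ∀ w, sin w ≠ 0 → f w = ρ (log |sin w|))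
    {t : ℝ} (ht0 : t ≠ 0) (ht1 : |t| ≤ 1) : f (arcsin |t|) = ρ (log |t|) := by
  rw [hf _ (by rw [sin_arcsin_abs ht1]; exact abs_ne_zero.mpr ht0), sin_arcsin_abs ht1, abs_abs]

section

variable {Y : Type*} [AddCommGroup Y] {f ρ : ℝ → Y}

theorem arcsinSum_eq_fdiff (n : ℕ) (hf : ∀ w, sin w ≠ 0 → f w = ρ (log |sin w|)) {u v : ℝ}
    (hu : sin u ≠ 0) (hv : sin v ≠ 0) :
    arcsinSum n f u v = fdiff n (log |sin v|) ρ (log |sin u|) := by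
  refine sum_congr rfl fun i _ => ?_
  rw [apply_arcsin_abs_of_eq_comp_log_abs_sin hf (mul_ne_zero hu (pow_ne_zero i hv))
      (abs_sin_mul_sin_pow_le_one u v i),
    abs_mul, abs_pow, log_mul (abs_ne_zero.mpr hu) (pow_ne_zero i (abs_ne_zero.mpr hv)), log_pow]

theorem arcsinSum_pi_div_two_arcsin_abs_sin (n : ℕ) (f : ℝ → Y) (w : ℝ) :
    arcsinSum n f (π / 2) (arcsin |sin w|) = arcsinSum n f (π / 2) w := by
  simp only [arcsinSum, sin_pi_div_two, one_mul, sin_arcsin_abs (abs_sin_le_one w), abs_pow,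
    abs_abs]

theorem eq_comp_log_abs_sin_of_arcsinSum_eq {n : ℕ}
    (hinj : Function.Injective (fun y : Y => (n.factorial : ℤ) • y))
    (h : ∀ u v, sin u ≠ 0 → sin v ≠ 0 → arcsinSum n f u v = (n.factorial : ℤ) • f v)
    {w : ℝ} (hw : sin w ≠ 0) : f w = f (arcsin (exp (log |sin w|))) := by
  have hw' : sin (arcsin |sin w|) ≠ 0 := by
    rw [sin_arcsin_abs (abs_sin_le_one w)]; exact abs_ne_zero.mpr hw
  rw [exp_log (abs_pos.mpr hw)]
  apply hinj
  simp only [← h (π / 2) _ (by simp) hw, ← h (π / 2) _ (by simp) hw',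
    arcsinSum_pi_div_two_arcsin_abs_sin]

end

theorem arcsine_monomial_general {Y : Type*} [AddCommGroup Y]
    (n : ℕ)
    (hdiv : Function.Bijective (fun y : Y => (n.factorial : ℤ) • y))
    (f : ℝ → Y) :
    (∀ u v : ℝ, Real.sin u ≠ 0 → Real.sin v ≠ 0 →
        ∑ i ∈ Finset.range (n + 1),
          ((-1) ^ (n - i) * (n.choose i) : ℤ) •
            f (Real.arcsin |Real.sin u * (Real.sin v) ^ i|) =
        (n.factorial : ℤ) • f v) ↔
      ∃ ρ : ℝ → Y,
        (∀ x ∈ Set.Iic (0 : ℝ), ∀ y ∈ Set.Iic (0 : ℝ),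
          fdiff n y ρ x = (n.factorial : ℤ) • ρ y) ∧
        ∀ u : ℝ, Real.sin u ≠ 0 → f u = ρ (Real.log |Real.sin u|) := by
  constructor
  · intro h
    have hf : ∀ w, sin w ≠ 0 → f w = f (arcsin (exp (log |sin w|))) :=
      fun w => eq_comp_log_abs_sin_of_arcsinSum_eq hdiv.injective h
    refine ⟨fun x => f (arcsin (exp x)), fun x hx y hy => ?_, hf⟩
    obtain ⟨u, hu, rfl⟩ := exists_log_abs_sin_eq hx
    obtain ⟨v, hv, rfl⟩ := exists_log_abs_sin_eq hy
    rw [← arcsinSum_eq_fdiff (ρ := fun x => f (arcsin (exp x))) n hf hu hv]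
    exact (h u v hu hv).trans (by rw [hf v hv])
  · rintro ⟨ρ, hmono, hf⟩ u v hu hv
    rw [hf v hv, ← hmono _ (log_abs_sin_nonpos u) _ (log_abs_sin_nonpos v)]
    exact arcsinSum_eq_fdiff n hf hu hv

/-- Arcsine-monomial equation: on `U = {u : ℝ | sin u ≠ 0}`, `f` satisfies
`Σ_{i=0}^{n} (-1)^{n-i} C(n,i) • f(arcsin |sin u · (sin v)^i|) = n! • f(v)` iff
`f(u) = ρ(ln |sin u|)` on `U` for some `ρ : ℝ → Y` which is an `n`-monomial
on `(-∞, 0]`. -/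
theorem arcsine_monomial {Y : Type*} [AddCommGroup Y]
    (n : ℕ) (hn : 0 < n)
    (hdiv : Function.Bijective (fun y : Y => (n.factorial : ℤ) • y))
    (f : ℝ → Y) :
    (∀ u v : ℝ, Real.sin u ≠ 0 → Real.sin v ≠ 0 →
        ∑ i ∈ Finset.range (n + 1),
          ((-1) ^ (n - i) * (n.choose i) : ℤ) •
            f (Real.arcsin |Real.sin u * (Real.sin v) ^ i|) =
        (n.factorial : ℤ) • f v) ↔
      ∃ ρ : ℝ → Y,
        (∀ x ∈ Set.Iic (0 : ℝ), ∀ y ∈ Set.Iic (0 : ℝ),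
          fdiff n y ρ x = (n.factorial : ℤ) • ρ y) ∧
        ∀ u : ℝ, Real.sin u ≠ 0 → f u = ρ (Real.log |Real.sin u|) :=
  arcsine_monomial_general n hdiv f
end

section
/- Let n be a positive integer and let (Y,+) be an abelian group that is (n!)-divisible (the map y ↦ (n!) • y is bijective on Y). If f : ℝ → Y satisfies Σ_{i=0}^{n} (-1)^{n-i} (n choose i) • f(arcsin |sin u · (sin v)^i|) = (n!) • f(v) for all u, v ∈ ℝ (that is, the arcsine-monomial equation holds on a domain containing some point kπ, k ∈ ℤ), then f is identically zero. In particular, U = ℝ \ {kπ | k ∈ ℤ} is the maximal domain on which the arcsine-monomial equation admits nontrivial solutions. -/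
open Finset Real

theorem Int.sum_range_neg_one_pow_sub_mul_choose {n : ℕ} (hn : n ≠ 0) :
    ∑ i ∈ Finset.range (n + 1), ((-1) ^ (n - i) * n.choose i : ℤ) = 0 := by
  simpa [hn] using (add_pow (1 : ℤ) (-1) n).symm

/-- If the arcsine-monomial equation holds for all real `u, v` (so in
particular at points `u = kπ`, where `sin u = 0`), then `f` is identically
zero; thus `ℝ \ {kπ | k ∈ ℤ}` is the maximal domain admitting nontrivial
solutions. -/
theorem arcsine_monomial_trivial_on_full_domain {Y : Type*} [AddCommGroup Y]
    (n : ℕ) (hn : 0 < n)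
    (hdiv : Function.Bijective (fun y : Y => (n.factorial : ℤ) • y))
    (f : ℝ → Y)
    (hf : ∀ u v : ℝ,
        ∑ i ∈ Finset.range (n + 1),
          ((-1) ^ (n - i) * (n.choose i) : ℤ) •
            f (Real.arcsin |Real.sin u * (Real.sin v) ^ i|) =
        (n.factorial : ℤ) • f v) :
    ∀ v : ℝ, f v = 0 := by
  intro v
  have h := hf 0 v
  simp only [sin_zero, zero_mul, abs_zero, arcsin_zero] at h
  rw [← sum_smul, Int.sum_range_neg_one_pow_sub_mul_choose hn.ne', zero_smul] at h
  exact hdiv.injective (by simpa using h.symm)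
end
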